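/- arXiv:1512.02909 — 9 statements merged into one kernel-verified Lean document; each statement's English description precedes it below -/
import Mathlib

section
/- Let n ≥ 2 and 1 ≤ k ≤ n be integers, and let C be any subset of {1,…,n} with |C| = k. Then EMD(C) ≥ (n+k)(n−k) / (4·n·(n−1)·k). -/
/-- The Earth Mover's Distance (with the ordered distance) between the uniform
distribution on a cluster `C ⊆ {1,…,n}` of `k` records and the uniform
distribution on the whole data set `{1,…,n}`. -/
noncomputable def EMD (n k : ℕ) (C : Finset ℕ) : ℝ :=
  (1 / ((n : ℝ) - 1)) * ∑ i ∈ Finset.Icc 1 n,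
    |∑ j ∈ Finset.Icc 1 i, ((if j ∈ C then (1 : ℝ) / k else 0) - 1 / n)|

open Finset Metric

/-!
Write `G i = ∑_{j ≤ i} (χ_C j / k - 1/n)`, so that `(n - 1) · EMD C = ∑ |G i|`. Pairing the signed
measure `χ_C / k - 1/n` with the 1-Lipschitz function `-dist(·, C)` and summing by parts (weak
Kantorovich duality in dimension one) gives `∑ |G i| ≥ (1/n) ∑_{j ≤ n} dist(j, C)`. Grouping the
points `1, …, n` by a nearest point of `C` splits them into `k` fibres; a fibre of `m` distinct
integers has total distance at least `(m² - 1)/4` to its centre (peel off its two extreme points),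
and Cauchy–Schwarz on the fibre sizes yields `∑_{j ≤ n} dist(j, C) ≥ (n²/k - k)/4`.
-/

theorem sum_Icc_one_by_parts {R : Type*} [CommRing R] (e f : ℕ → R) (N : ℕ) :
    ∑ j ∈ Icc 1 N, e j * f j = (∑ j ∈ Icc 1 N, e j) * f (N + 1) -
      ∑ i ∈ Icc 1 N, (∑ j ∈ Icc 1 i, e j) * (f (i + 1) - f i) := by
  induction N with
  | zero => simp
  | succ N ih =>
    simp only [sum_Icc_succ_top (Nat.le_add_left 1 N), ih]
    ring

theorem sum_mul_le_sum_abs_cumsum {e f : ℕ → ℝ} {n : ℕ} (hf : ∀ j, |f (j + 1) - f j| ≤ 1)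
    (he : ∑ j ∈ Icc 1 n, e j = 0) :
    ∑ j ∈ Icc 1 n, e j * f j ≤ ∑ i ∈ Icc 1 n, |∑ j ∈ Icc 1 i, e j| := by
  rw [sum_Icc_one_by_parts, he, zero_mul, zero_sub, ← sum_neg_distrib]
  gcongr with i
  calc -((∑ j ∈ Icc 1 i, e j) * (f (i + 1) - f i))
      ≤ |∑ j ∈ Icc 1 i, e j| * |f (i + 1) - f i| := by rw [← abs_mul]; exact neg_le_abs _
    _ ≤ |∑ j ∈ Icc 1 i, e j| := mul_le_of_le_one_right (abs_nonneg _) (hf i)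

theorem sq_card_sub_one_le_four_mul_sum_abs_sub (A : Finset ℕ) (u : ℝ) :
    (#A : ℝ) ^ 2 - 1 ≤ 4 * ∑ x ∈ A, |(x : ℝ) - u| := by
  induction A using Finset.strongInduction with
  | H A ih =>
    have hsum_nonneg : 0 ≤ ∑ x ∈ A, |(x : ℝ) - u| := sum_nonneg fun _ _ => abs_nonneg _
    by_cases hA : #A ≤ 1
    · have : (#A : ℝ) ≤ 1 := by exact_mod_cast hA
      nlinarith
    have hne : A.Nonempty := card_pos.1 (by omega)
    set a := A.min' hne
    set b := A.max' hne
    have hab : a < b := min'_lt_max'_of_card A (by omega)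
    have hspan : #A + a ≤ b + 1 := by
      have : #A ≤ #(Icc a b) :=
        card_le_card fun x hx => mem_Icc.2 ⟨min'_le A x hx, le_max' A x hx⟩
      rw [Nat.card_Icc] at this
      omega
    have ha : a ∈ A := min'_mem A hne
    have hbA : b ∈ A.erase a := mem_erase.2 ⟨hab.ne', max'_mem A hne⟩
    set A' := (A.erase a).erase b
    have hcard : #A' + 2 = #A := by
      rw [card_erase_of_mem hbA, card_erase_of_mem ha]
      omega
    have hsum : ∑ x ∈ A, |(x : ℝ) - u| =
        |(a : ℝ) - u| + |(b : ℝ) - u| + ∑ x ∈ A', |(x : ℝ) - u| := by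
      rw [← add_sum_erase A _ ha, ← add_sum_erase _ _ hbA, add_assoc]
    have hgap : (#A : ℝ) - 1 ≤ |(a : ℝ) - u| + |(b : ℝ) - u| := by
      have : (#A : ℝ) + a ≤ b + 1 := by exact_mod_cast hspan
      linarith [abs_sub ((b : ℝ) - u) ((a : ℝ) - u), le_abs_self (((b : ℝ) - u) - ((a : ℝ) - u))]
    have ih' := ih A' ((erase_ssubset hbA).trans (erase_ssubset ha))
    have hcard' : (#A' : ℝ) + 2 = #A := by exact_mod_cast hcard
    rw [hsum]
    nlinarith

theorem sq_card_le_card_mul_sum_sq_card_fiberwise {α β : Type*} [DecidableEq β] {s : Finset α}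
    {t : Finset β} {σ : α → β} (h : ∀ a ∈ s, σ a ∈ t) :
    #s ^ 2 ≤ #t * ∑ b ∈ t, #{a ∈ s | σ a = b} ^ 2 :=
  card_eq_sum_card_fiberwise h ▸ sq_sum_le_card_mul_sum_sq

theorem sq_card_sub_sq_card_le_four_mul_card_mul_sum_infDist (S C : Finset ℕ) (hC : C.Nonempty) :
    (#S : ℝ) ^ 2 - #C ^ 2 ≤ 4 * #C * ∑ j ∈ S, infDist (j : ℝ) ((↑) '' (C : Set ℕ)) := by
  have hnearest : ∀ j : ℕ, ∃ u ∈ C, infDist (j : ℝ) ((↑) '' (C : Set ℕ)) = |(j : ℝ) - u| := by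
    intro j
    obtain ⟨_, ⟨u, hu, rfl⟩, h⟩ :=
      (C.finite_toSet.image _).isCompact.exists_infDist_eq_dist (hC.to_set.image _) (j : ℝ)
    exact ⟨u, hu, h⟩
  choose σ hσC hσ using hnearest
  have hmaps : ∀ j ∈ S, σ j ∈ C := fun j _ => hσC j
  have hfiber : ∀ u ∈ C, (#{j ∈ S | σ j = u} : ℝ) ^ 2 - 1 ≤
      4 * ∑ j ∈ S with σ j = u, infDist (j : ℝ) ((↑) '' (C : Set ℕ)) := by
    intro u _
    rw [sum_congr rfl fun j hj => by rw [hσ j, (mem_filter.1 hj).2]]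
    exact sq_card_sub_one_le_four_mul_sum_abs_sub _ _
  have hcs : (#S : ℝ) ^ 2 ≤ #C * ∑ u ∈ C, (#{j ∈ S | σ j = u} : ℝ) ^ 2 := by
    exact_mod_cast sq_card_le_card_mul_sum_sq_card_fiberwise hmaps
  have hsum := sum_le_sum hfiber
  rw [sum_sub_distrib, ← mul_sum, sum_fiberwise_of_maps_to hmaps, sum_const, nsmul_one] at hsum
  nlinarith

theorem sum_infDist_div_le_sum_abs_cumsum {n : ℕ} {C : Finset ℕ} (hC : C ⊆ Icc 1 n)
    (hC₀ : C.Nonempty) :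
    (∑ j ∈ Icc 1 n, infDist (j : ℝ) ((↑) '' (C : Set ℕ))) / n ≤
      ∑ i ∈ Icc 1 n, |∑ j ∈ Icc 1 i, ((if j ∈ C then (1 : ℝ) / #C else 0) - 1 / n)| := by
  set d : ℕ → ℝ := fun j => infDist (j : ℝ) ((↑) '' (C : Set ℕ))
  set e : ℕ → ℝ := fun j => (if j ∈ C then (1 : ℝ) / #C else 0) - 1 / n
  have hC_pos : (0 : ℝ) < #C := by exact_mod_cast card_pos.2 hC₀
  have hn_pos : (0 : ℝ) < n := hC_pos.trans_le (by simpa using card_le_card hC)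
  have he : ∑ j ∈ Icc 1 n, e j = 0 := by
    simp only [e, sum_sub_distrib, sum_ite_mem, inter_eq_right.2 hC, sum_const, Nat.card_Icc,
      Nat.add_sub_cancel, nsmul_eq_mul]
    rw [mul_one_div_cancel hC_pos.ne', mul_one_div_cancel hn_pos.ne', sub_self]
  have hd : ∀ j, |-d (j + 1) - -d j| ≤ 1 := fun j => by
    have := (lipschitz_infDist_pt ((↑) '' (C : Set ℕ))).dist_le_mul ((j + 1 : ℕ) : ℝ) j
    rw [neg_sub_neg, abs_sub_comm]
    simpa [d, Real.dist_eq] using this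
  have hed : ∑ j ∈ Icc 1 n, e j * -d j = (∑ j ∈ Icc 1 n, d j) / n := by
    rw [sum_div]
    refine sum_congr rfl fun j _ => ?_
    by_cases hj : j ∈ C
    · simp [d, hj, infDist_zero_of_mem]
    · simp only [e, hj, if_false]
      ring
  exact hed ▸ sum_mul_le_sum_abs_cumsum hd he

theorem emd_lower_bound_general (n k : ℕ) (hk : 1 ≤ k) (hkn : k ≤ n)
    (C : Finset ℕ) (hC : C ⊆ Finset.Icc 1 n) (hcard : C.card = k) :
    ((n : ℝ) + k) * ((n : ℝ) - k) / (4 * n * ((n : ℝ) - 1) * k) ≤ EMD n k C := by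
  have hC₀ : C.Nonempty := card_pos.1 (hcard ▸ hk)
  have hn₁ : (1 : ℝ) ≤ n := by exact_mod_cast hk.trans hkn
  have hfiber := sq_card_sub_sq_card_le_four_mul_card_mul_sum_infDist (Icc 1 n) C hC₀
  rw [Nat.card_Icc, Nat.add_sub_cancel, hcard] at hfiber
  have hdual := sum_infDist_div_le_sum_abs_cumsum hC hC₀
  rw [hcard] at hdual
  have key : ((n : ℝ) + k) * ((n : ℝ) - k) / (4 * n * k) ≤
      ∑ i ∈ Icc 1 n, |∑ j ∈ Icc 1 i, ((if j ∈ C then (1 : ℝ) / k else 0) - 1 / n)| := by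
    refine le_trans ?_ hdual
    rw [div_le_div_iff₀ (by positivity) (by positivity)]
    nlinarith
  rw [EMD, one_div_mul_eq_div, show (4 : ℝ) * n * (n - 1) * k = 4 * n * k * (n - 1) by ring,
    ← div_div]
  exact div_le_div_of_nonneg_right key (by linarith)

/-- Any cluster of `k` records among `n` has EMD at least
`(n+k)(n−k)/(4n(n−1)k)`. -/
theorem emd_lower_bound (n k : ℕ) (hn : 2 ≤ n) (hk : 1 ≤ k) (hkn : k ≤ n)
    (C : Finset ℕ) (hC : C ⊆ Finset.Icc 1 n) (hcard : C.card = k) :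
    ((n : ℝ) + k) * ((n : ℝ) - k) / (4 * n * ((n : ℝ) - 1) * k) ≤ EMD n k C :=
  emd_lower_bound_general n k hk hkn C hC hcard
end

section
/- Let n ≥ 2 and k ≥ 1 be integers with k dividing n, and set m = n/k. Assume m is odd, and let C = { (i−1)·m + (m+1)/2 : i = 1,…,k } be the cluster consisting of the median position of each of the k consecutive blocks of m positions. Then EMD(C) = (n+k)(n−k) / (4·n·(n−1)·k); in particular, the lower bound (n+k)(n−k)/(4n(n−1)k) on the Earth Mover's Distance of clusters of size k is attained. -/
/-!
Write `d = m - c` for the distance from the chosen position `(i - 1) * m + c` of each block to the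
end of the block. Up to position `x` the cluster has `⌊(x + d) / m⌋` points, so the partial sum in
`EMD` is `(d - (x + d) % m) / n`. Its absolute value is `m`-periodic in `x`, so summing over the
`k` blocks gives `k * ∑_{b < m} |d - b|`; for the medians of blocks of odd length `m = 2t + 1`
we have `d = t`, and `∑_{b ≤ 2t} |t - b| = t (t + 1)`, which is the claimed value.
-/

open Finset

namespace Function.Periodic

variable {M : Type*} [AddCancelCommMonoid M] {f : ℕ → M} {m : ℕ}

theorem sum_range_comp_add (hf : Periodic f m) (a : ℕ) :
    ∑ x ∈ range m, f (a + x) = ∑ x ∈ range m, f x := by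
  induction a with
  | zero => simp only [zero_add]
  | succ a ih =>
    have h := (sum_range_succ' (fun x => f (a + x)) m).symm.trans
      (sum_range_succ (fun x => f (a + x)) m)
    rw [add_zero, hf a, add_left_inj] at h
    rw [← ih, ← h]
    exact sum_congr rfl fun x _ => by rw [add_right_comm, add_assoc]

theorem sum_range_mul_comp_add (hf : Periodic f m) (k a : ℕ) :
    ∑ x ∈ range (k * m), f (a + x) = k • ∑ x ∈ range m, f x := by
  induction k with
  | zero => simp
  | succ k ih =>
    have hshift : ∀ x, f (a + (k * m + x)) = f (a + x) := fun x => by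
      have h := hf.nat_mul k (a + x)
      rw [Nat.cast_id] at h
      rw [add_left_comm, add_comm, h]
    rw [Nat.succ_mul, sum_range_add, ih, succ_nsmul]
    simp only [hshift, hf.sum_range_comp_add]

end Function.Periodic

def blockCluster (k m c : ℕ) : Finset ℕ :=
  (Icc 1 k).image fun i => (i - 1) * m + c

section BlockCluster

variable {k m c x : ℕ}

theorem Icc_inter_blockCluster (hc : 1 ≤ c) (hcm : c ≤ m) (hx : x ≤ k * m) :
    Icc 1 x ∩ blockCluster k m c = (Icc 1 ((x + (m - c)) / m)).image fun i => (i - 1) * m + c := by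
  have hm : 0 < m := by omega
  have hle_iff : ∀ i, 1 ≤ i → ((i - 1) * m + c ≤ x ↔ i ≤ (x + (m - c)) / m) := by
    intro i hi
    obtain ⟨i, rfl⟩ := Nat.exists_eq_add_of_le' hi
    rw [Nat.le_div_iff_mul_le hm, Nat.add_sub_cancel, Nat.succ_mul]
    omega
  have hdiv_le : (x + (m - c)) / m ≤ k :=
    Nat.lt_succ_iff.mp <| (Nat.div_lt_iff_lt_mul hm).2 (by rw [Nat.succ_mul]; omega)
  ext j
  simp only [blockCluster, mem_inter, mem_Icc, mem_image]
  constructor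
  · rintro ⟨⟨-, hjx⟩, i, ⟨hi, -⟩, rfl⟩
    exact ⟨i, ⟨hi, (hle_iff i hi).1 hjx⟩, rfl⟩
  · rintro ⟨i, ⟨hi, hiq⟩, rfl⟩
    exact ⟨⟨by omega, (hle_iff i hi).2 hiq⟩, i, ⟨hi, hiq.trans hdiv_le⟩, rfl⟩

theorem card_Icc_inter_blockCluster (hc : 1 ≤ c) (hcm : c ≤ m) (hx : x ≤ k * m) :
    #(Icc 1 x ∩ blockCluster k m c) = (x + (m - c)) / m := by
  rw [Icc_inter_blockCluster hc hcm hx, card_image_of_injOn, Nat.card_Icc, Nat.add_sub_cancel]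
  intro i hi j hj hij
  simp only [coe_Icc, Set.mem_Icc] at hi hj
  have := Nat.eq_of_mul_eq_mul_right (by omega : 0 < m) (Nat.add_right_cancel hij)
  omega

theorem sum_Icc_indicator_blockCluster_sub (hk : k ≠ 0) (hc : 1 ≤ c) (hcm : c ≤ m)
    (hx : x ≤ k * m) :
    ∑ j ∈ Icc 1 x, ((if j ∈ blockCluster k m c then (1 : ℝ) / k else 0) - 1 / ((k * m : ℕ) : ℝ))
      = (((m - c : ℕ) : ℝ) - ((x + (m - c)) % m : ℕ)) / (k * m : ℕ) := by
  rw [sum_sub_distrib, sum_ite_mem, sum_const, sum_const, card_Icc_inter_blockCluster hc hcm hx,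
    Nat.card_Icc, Nat.add_sub_cancel, nsmul_eq_mul, nsmul_eq_mul]
  have hdiv_add_mod : ((m * ((x + (m - c)) / m) + (x + (m - c)) % m : ℕ) : ℝ)
      = ((x + (m - c) : ℕ) : ℝ) := by rw [Nat.div_add_mod]
  have hm : (m : ℝ) ≠ 0 := by norm_cast; omega
  have hk' : (k : ℝ) ≠ 0 := by exact_mod_cast hk
  push_cast at hdiv_add_mod ⊢
  field_simp
  linear_combination hdiv_add_mod

theorem EMD_blockCluster (hk : k ≠ 0) (hc : 1 ≤ c) (hcm : c ≤ m) :
    EMD (k * m) k (blockCluster k m c)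
      = k * (∑ b ∈ range m, |((m - c : ℕ) : ℝ) - b|) / ((k * m : ℕ) * (((k * m : ℕ) : ℝ) - 1)) := by
  let g : ℕ → ℝ := fun x => |((m - c : ℕ) : ℝ) - (x % m : ℕ)|
  have hg : Function.Periodic g m := fun x => by simp only [g, Nat.add_mod_right]
  have hsum : ∑ x ∈ Icc 1 (k * m), |((m - c : ℕ) : ℝ) - ((x + (m - c)) % m : ℕ)|
      = k * ∑ b ∈ range m, |((m - c : ℕ) : ℝ) - b| := by
    change ∑ x ∈ Icc 1 (k * m), g (x + (m - c)) = _
    rw [← Ico_add_one_right_eq_Icc, sum_Ico_eq_sum_range, Nat.add_sub_cancel,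
      sum_congr rfl fun x _ => show g (1 + x + (m - c)) = g (m - c + 1 + x) by ring_nf,
      hg.sum_range_mul_comp_add, nsmul_eq_mul]
    congr 1
    exact sum_congr rfl fun b hb => by simp only [g, Nat.mod_eq_of_lt (mem_range.1 hb)]
  unfold EMD
  rw [sum_congr rfl fun x hx =>
    by rw [sum_Icc_indicator_blockCluster_sub hk hc hcm (mem_Icc.1 hx).2, abs_div,
      Nat.abs_cast]]
  rw [← sum_div, hsum, div_mul_div_comm, one_mul, mul_comm (_ - 1)]

end BlockCluster

theorem sum_range_abs_sub_center (t : ℕ) :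
    ∑ b ∈ range (2 * t + 1), |(t : ℝ) - b| = t * (t + 1) := by
  induction t with
  | zero => simp
  | succ t ih =>
    rw [show 2 * (t + 1) + 1 = 2 * t + 1 + 1 + 1 by ring, sum_range_succ, sum_range_succ']
    push_cast
    simp only [add_sub_add_right_eq_sub, ih, sub_zero]
    rw [abs_of_nonneg (by positivity), abs_of_nonpos (by linarith)]
    ring

theorem emd_lower_bound_attained_general (n k m : ℕ)
    (hdvd : k ∣ n) (hm : m = n / k) (hmodd : Odd m)
    (C : Finset ℕ)
    (hC : C = (Finset.Icc 1 k).image (fun i => (i - 1) * m + (m + 1) / 2)) :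
    EMD n k C = ((n : ℝ) + k) * ((n : ℝ) - k) / (4 * n * ((n : ℝ) - 1) * k) := by
  obtain ⟨t, rfl⟩ := hmodd
  have hk : k ≠ 0 := by
    -- `n / 0 = 0` is not odd
    rintro rfl
    rw [Nat.div_zero] at hm
    omega
  have hn : n = k * (2 * t + 1) := by rw [hm, Nat.mul_div_cancel' hdvd]
  have hmedian : (2 * t + 1 + 1) / 2 = t + 1 := by omega
  have hd : 2 * t + 1 - (t + 1) = t := by omega
  have hC' : C = blockCluster k (2 * t + 1) (t + 1) := by rw [hC, hmedian]; rfl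
  rw [hC', hn, EMD_blockCluster hk (by omega) (by omega), hd, sum_range_abs_sub_center]
  push_cast
  rw [← mul_div_mul_left _ _ (by positivity : (4 * k : ℝ) ≠ 0)]
  congr 1 <;> ring

/-- If `k ∣ n`, `m = n/k` is odd, and `C` consists of the median position of
each of the `k` consecutive blocks of `m` positions, then the EMD of `C`
equals the lower bound `(n+k)(n−k)/(4n(n−1)k)`; in particular the lower bound
is attained. -/
theorem emd_lower_bound_attained (n k m : ℕ) (hn : 2 ≤ n) (hk : 1 ≤ k)
    (hdvd : k ∣ n) (hm : m = n / k) (hmodd : Odd m)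
    (C : Finset ℕ)
    (hC : C = (Finset.Icc 1 k).image (fun i => (i - 1) * m + (m + 1) / 2)) :
    EMD n k C = ((n : ℝ) + k) * ((n : ℝ) - k) / (4 * n * ((n : ℝ) - 1) * k) :=
  emd_lower_bound_attained_general n k m hdvd hm hmodd C hC
end

section
/- Let n, k, t be real numbers with n > 1, k > 0, k ≤ n and t ≥ 0. Then (n+k)(n−k) / (4·n·(n−1)·k) ≤ t if and only if k ≥ n·( √(4(n−1)²t² + 1) − 2(n−1)t ). Consequently, once n and t are fixed, the minimum cluster size k for which the Earth Mover's Distance lower bound (n+k)(n−k)/(4n(n−1)k) does not exceed t is n·( √(4(n−1)²t² + 1) − 2(n−1)t ). -/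
/-- For reals `n > 1`, `0 < k ≤ n`, `t ≥ 0`, the EMD lower bound
`(n+k)(n−k)/(4n(n−1)k)` is at most `t` if and only if
`k ≥ n(√(4(n−1)²t²+1) − 2(n−1)t)`; hence the minimum admissible cluster size
is `n(√(4(n−1)²t²+1) − 2(n−1)t)`. -/
theorem min_cluster_size_for_lower_bound (n k t : ℝ) (hn : 1 < n) (hk : 0 < k)
    (hkn : k ≤ n) (ht : 0 ≤ t) :
    (n + k) * (n - k) / (4 * n * (n - 1) * k) ≤ t ↔
      n * (Real.sqrt (4 * (n - 1) ^ 2 * t ^ 2 + 1) - 2 * (n - 1) * t) ≤ k := by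
  set s := Real.sqrt (4 * (n - 1) ^ 2 * t ^ 2 + 1) with hs
  have hn0 : 0 < n := by linarith
  have harg : 0 ≤ 4 * (n - 1) ^ 2 * t ^ 2 + 1 := by positivity
  have hs0 : 0 ≤ s := Real.sqrt_nonneg _
  have hss : s ^ 2 = 4 * (n - 1) ^ 2 * t ^ 2 + 1 := Real.sq_sqrt harg
  have ha : 0 ≤ 2 * (n - 1) * t := by nlinarith
  have hpos : 0 < 4 * n * (n - 1) * k := by
    have h1 : (0:ℝ) < n - 1 := by linarith
    have := mul_pos (mul_pos hn0 h1) hk; nlinarith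
  rw [div_le_iff₀ hpos]
  constructor
  · intro h
    have hsq : (n * s) ^ 2 ≤ (k + n * (2 * (n - 1) * t)) ^ 2 := by nlinarith
    have hle : n * s ≤ k + n * (2 * (n - 1) * t) := by
      have h1 : 0 ≤ n * s := mul_nonneg hn0.le hs0
      have h2 : 0 ≤ k + n * (2 * (n - 1) * t) := by nlinarith
      nlinarith [sq_nonneg (n * s - (k + n * (2 * (n - 1) * t)))]
    nlinarith
  · intro h
    have hle : n * s ≤ k + n * (2 * (n - 1) * t) := by nlinarith
    have hsq : (n * s) ^ 2 ≤ (k + n * (2 * (n - 1) * t)) ^ 2 := by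
      have h1 : 0 ≤ n * s := mul_nonneg hn0.le hs0
      nlinarith
    nlinarith
end

section
/- Let n ≥ 2 and k ≥ 1 be integers with k dividing n, set m = n/k, and let S_i = {(i−1)·m+1, …, i·m} for i = 1,…,k be the partition of {1,…,n} into k consecutive blocks of m positions each. If C ⊆ {1,…,n} contains exactly one element of each block S_i (so |C| = k), then EMD(C) ≤ (n−k) / (2·(n−1)·k). -/
/-!
Write `n = k m` and `N i = #(C ∩ (0, i])`. The `i`-th partial sum in `EMD` is `(m N i - i) / n`.
On the block `(t m, (t + 1) m]`, whose only point of `C` is `c`, we have `N i = t + [c ≤ i]`, so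
`|m N i - i|` equals `i - t m` before `c` and `(t + 1) m - i` from `c` on. With
`c = t m + p + 1` and `m = p + q + 1` the block contributes `(p (p + 1) + q (q + 1)) / 2`, which
falls short of `m (m - 1) / 2` by `p q`. Summing over the `k` blocks,
`EMD ≤ k m (m - 1) / (2 (n - 1) n) = (n - k) / (2 (n - 1) k)`.
-/

open Finset

theorem sum_Ioc_zero_mul_eq_sum_range {M : Type*} [AddCommMonoid M] (f : ℕ → M) (k m : ℕ) :
    ∑ i ∈ Ioc 0 (k * m), f i = ∑ t ∈ range k, ∑ i ∈ Ioc (t * m) ((t + 1) * m), f i := by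
  induction k with
  | zero => simp
  | succ k ih =>
    rw [sum_range_succ, ← ih,
      sum_Ioc_consecutive _ (Nat.zero_le _) (Nat.mul_le_mul_right _ k.le_succ)]

section Gauss

variable {R : Type*} [CommRing R]

theorem two_mul_sum_Ioc_cast_sub {a b : ℕ} (hab : a ≤ b) :
    2 * ∑ i ∈ Ioc a b, ((i : R) - a) = (b - a) * (b - a + 1) := by
  induction b, hab using Nat.le_induction with
  | base => simp
  | succ b hab ih => rw [sum_Ioc_succ_top hab, mul_add, ih]; push_cast; ring

theorem two_mul_sum_Ioc_sub_cast {a b : ℕ} (hab : a ≤ b) :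
    2 * ∑ i ∈ Ioc a b, ((b : R) - i) = (b - a) * (b - a - 1) := by
  have hsplit : ∀ i ∈ Ioc a b, (b : R) - i = (b - a) - (i - a) := fun _ _ => by ring
  rw [sum_congr rfl hsplit, sum_sub_distrib, mul_sub, two_mul_sum_Ioc_cast_sub hab, sum_const,
    Nat.card_Ioc, nsmul_eq_mul, Nat.cast_sub hab]
  ring

end Gauss

theorem two_mul_sum_Ioc_abs_step_sub_le {R : Type*} [CommRing R] [LinearOrder R]
    [IsStrictOrderedRing R] {a c m : ℕ} (hc : c ∈ Ioc a (a + m)) :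
    2 * ∑ i ∈ Ioc a (a + m), |(if c ≤ i then (m : R) else 0) - (i - a)| ≤ m * (m - 1) := by
  obtain ⟨p, q, rfl, rfl⟩ : ∃ p q, c = a + p + 1 ∧ m = p + q + 1 := by
    obtain ⟨hac, hcm⟩ := mem_Ioc.mp hc
    exact ⟨c - a - 1, a + m - c, by omega, by omega⟩
  have hbelow : ∀ i ∈ Ioc a (a + p),
      |(if a + p + 1 ≤ i then ((p + q + 1 : ℕ) : R) else 0) - (i - a)| = i - a := by
    intro i hi
    obtain ⟨hai, hip⟩ := mem_Ioc.mp hi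
    rw [if_neg (by omega), zero_sub, abs_neg,
      abs_of_nonneg (sub_nonneg.mpr (by exact_mod_cast hai.le))]
  have habove : ∀ i ∈ Ioc (a + p) (a + (p + q + 1)),
      |(if a + p + 1 ≤ i then ((p + q + 1 : ℕ) : R) else 0) - (i - a)|
        = ((a + (p + q + 1) : ℕ) : R) - i := by
    intro i hi
    obtain ⟨hpi, him⟩ := mem_Ioc.mp hi
    have him' : (i : R) ≤ ((a + (p + q + 1) : ℕ) : R) := by exact_mod_cast him
    rw [if_pos (by omega), abs_of_nonneg (by push_cast at him' ⊢; linarith)]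
    push_cast
    ring
  rw [← sum_Ioc_consecutive _ (by omega : a ≤ a + p) (by omega : a + p ≤ a + (p + q + 1)),
    sum_congr rfl hbelow, sum_congr rfl habove, mul_add, two_mul_sum_Ioc_cast_sub (by omega),
    two_mul_sum_Ioc_sub_cast (by omega)]
  push_cast
  have hpq : (0 : R) ≤ p * q := by positivity
  linear_combination 2 * hpq

section Counting

variable (C : Finset ℕ)

theorem card_inter_Ioc_eq_sum (a b : ℕ) :
    #(C ∩ Ioc a b) = ∑ i ∈ Ioc a b, if i ∈ C then 1 else 0 := by
  rw [inter_comm, ← filter_mem_eq_inter, card_filter]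

theorem card_inter_Ioc_add_card_inter_Ioc {a b c : ℕ} (hab : a ≤ b) (hbc : b ≤ c) :
    #(C ∩ Ioc a b) + #(C ∩ Ioc b c) = #(C ∩ Ioc a c) := by
  simp only [card_inter_Ioc_eq_sum, sum_Ioc_consecutive _ hab hbc]

theorem card_inter_Ioc_zero_mul {k m : ℕ}
    (hblock : ∀ t < k, #(C ∩ Ioc (t * m) ((t + 1) * m)) = 1) :
    #(C ∩ Ioc 0 (k * m)) = k := by
  rw [card_inter_Ioc_eq_sum, sum_Ioc_zero_mul_eq_sum_range]
  simp_rw [← card_inter_Ioc_eq_sum]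
  rw [sum_congr rfl fun t ht => hblock t (mem_range.mp ht)]
  simp

theorem card_inter_Ioc_zero_of_inter_eq_singleton {a b c i t : ℕ}
    (hprev : #(C ∩ Ioc 0 a) = t) (hc : C ∩ Ioc a b = {c}) (hi : i ∈ Ioc a b) :
    #(C ∩ Ioc 0 i) = t + if c ≤ i then 1 else 0 := by
  obtain ⟨hai, hib⟩ := mem_Ioc.mp hi
  have hcab : c ∈ Ioc a b := mem_of_mem_inter_right (hc ▸ mem_singleton_self c)
  have hrestrict : C ∩ Ioc a i = {c} ∩ Ioc a i := by
    rw [← hc, inter_assoc, Ioc_inter_Ioc, max_self, min_eq_right hib]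
  rw [← card_inter_Ioc_add_card_inter_Ioc C (Nat.zero_le a) hai.le, hprev, hrestrict,
    singleton_inter]
  by_cases hci : c ≤ i <;> simp [hci, (mem_Ioc.mp hcab).1]

end Counting

theorem EMD_eq_sum_abs_div {n k m : ℕ} (C : Finset ℕ) (hk : k ≠ 0) (hm : m ≠ 0)
    (hnk : n = k * m) :
    EMD n k C = (∑ i ∈ Ioc 0 n, |(m : ℝ) * #(C ∩ Ioc 0 i) - i|) / (((n : ℝ) - 1) * n) := by
  have hIcc : ∀ i : ℕ, Icc 1 i = Ioc 0 i := fun i => Icc_add_one_left_eq_Ioc 0 i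
  have hpartial : ∀ i, ∑ j ∈ Icc 1 i, ((if j ∈ C then (1 : ℝ) / k else 0) - 1 / n)
      = ((m : ℝ) * #(C ∩ Ioc 0 i) - i) / n := by
    intro i
    rw [sum_sub_distrib, sum_ite_mem, sum_const, sum_const, Nat.card_Icc, hIcc, inter_comm, hnk]
    simp only [nsmul_eq_mul]
    push_cast
    field_simp
  rw [EMD]
  simp_rw [hpartial, abs_div, hIcc]
  rw [← sum_div, Nat.abs_cast, one_div_mul_eq_div, div_div, mul_comm]

theorem two_mul_sum_abs_discrepancy_le {k m : ℕ} (C : Finset ℕ)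
    (hblock : ∀ t < k, #(C ∩ Ioc (t * m) ((t + 1) * m)) = 1) :
    2 * ∑ i ∈ Ioc 0 (k * m), |(m : ℝ) * #(C ∩ Ioc 0 i) - i| ≤ k * (m * (m - 1)) := by
  rw [sum_Ioc_zero_mul_eq_sum_range, mul_sum]
  calc ∑ t ∈ range k, 2 * ∑ i ∈ Ioc (t * m) ((t + 1) * m), |(m : ℝ) * #(C ∩ Ioc 0 i) - i|
      ≤ ∑ _t ∈ range k, (m * (m - 1) : ℝ) := sum_le_sum fun t ht => ?_
    _ = k * (m * (m - 1)) := by simp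
  have ht : t < k := mem_range.mp ht
  have hprev := card_inter_Ioc_zero_mul C fun s hs => hblock s (hs.trans ht)
  obtain ⟨c, hc⟩ := card_eq_one.mp (hblock t ht)
  rw [add_one_mul] at hc ⊢
  have hterm : ∀ i ∈ Ioc (t * m) (t * m + m), |(m : ℝ) * #(C ∩ Ioc 0 i) - i|
      = |(if c ≤ i then (m : ℝ) else 0) - (i - (t * m : ℕ))| := by
    intro i hi
    rw [card_inter_Ioc_zero_of_inter_eq_singleton C hprev hc hi]
    split_ifs <;> push_cast <;> ring_nf
  rw [sum_congr rfl hterm]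
  exact two_mul_sum_Ioc_abs_step_sub_le (mem_of_mem_inter_right (hc ▸ mem_singleton_self c))

theorem emd_upper_bound_general (n k m : ℕ) (hn : 2 ≤ n) (hk : 1 ≤ k)
    (hdvd : k ∣ n) (hm : m = n / k)
    (C : Finset ℕ)
    (hone : ∀ i ∈ Finset.Icc 1 k,
      (C ∩ Finset.Icc ((i - 1) * m + 1) (i * m)).card = 1) :
    EMD n k C ≤ ((n : ℝ) - k) / (2 * ((n : ℝ) - 1) * k) := by
  have hnk : n = k * m := by rw [hm, Nat.mul_div_cancel' hdvd]
  have hm0 : m ≠ 0 := by rintro rfl; omega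
  have hblock : ∀ t < k, #(C ∩ Ioc (t * m) ((t + 1) * m)) = 1 := fun t ht => by
    simpa [Icc_add_one_left_eq_Ioc] using hone (t + 1) (mem_Icc.mpr ⟨by omega, ht⟩)
  have hsum := two_mul_sum_abs_discrepancy_le C hblock
  rw [← hnk] at hsum
  have hn1 : (0 : ℝ) ≤ n - 1 := by
    rw [sub_nonneg]; exact_mod_cast (by omega : 1 ≤ n)
  rw [EMD_eq_sum_abs_div C (by omega) hm0 hnk]
  calc (∑ i ∈ Ioc 0 n, |(m : ℝ) * #(C ∩ Ioc 0 i) - i|) / ((n - 1) * n)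
      ≤ k * (m * (m - 1)) / 2 / ((n - 1) * n) :=
        div_le_div_of_nonneg_right (by linarith) (mul_nonneg hn1 n.cast_nonneg)
    _ = ((n : ℝ) - k) / (2 * ((n : ℝ) - 1) * k) := by
      have hk0 : (k : ℝ) ≠ 0 := by positivity
      rw [hnk]; push_cast; field_simp

/-- If `k ∣ n`, `m = n/k`, and the cluster `C ⊆ {1,…,n}` contains exactly one
element of each consecutive block `S_i = {(i−1)m+1, …, im}` (so `|C| = k`),
then `EMD(C) ≤ (n−k)/(2(n−1)k)`. -/
theorem emd_upper_bound (n k m : ℕ) (hn : 2 ≤ n) (hk : 1 ≤ k)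
    (hdvd : k ∣ n) (hm : m = n / k)
    (C : Finset ℕ) (hC : C ⊆ Finset.Icc 1 n)
    (hone : ∀ i ∈ Finset.Icc 1 k,
      (C ∩ Finset.Icc ((i - 1) * m + 1) (i * m)).card = 1)
    (hcard : C.card = k) :
    EMD n k C ≤ ((n : ℝ) - k) / (2 * ((n : ℝ) - 1) * k) :=
  emd_upper_bound_general n k m hn hk hdvd hm C hone
end

section
/- Let n ≥ 2 and k ≥ 1 be integers with k dividing n, and set m = n/k. For the cluster C = { (i−1)·m + 1 : i = 1,…,k } consisting of the smallest position of each of the k consecutive blocks of m positions, EMD(C) = (n−k) / (2·(n−1)·k); i.e., the upper bound (n−k)/(2(n−1)k) for clusters containing one record per block is attained by the cluster of block minima. -/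
/-!
Write a position as `a * m + b + 1` with `a < k` and `b < m`. Up to that position the cluster
of block minima holds exactly `a + 1` records, so the gap between the two cumulative
distributions there is `(a + 1) / k - (a * m + b + 1) / (k * m) = (m - 1 - b) / (k * m) ≥ 0`.
Summing over `b` gives `(m - 1) / (2 * k)` per block, hence `(m - 1) / 2` over all positions,
and `(m - 1) / (2 * (n - 1)) = (n - k) / (2 * (n - 1) * k)`.
-/

open Finset

theorem Finset.sum_Icc_one_mul_eq_sum_range_sum_range {M : Type*} [AddCommMonoid M]
    (f : ℕ → M) (k m : ℕ) :
    ∑ i ∈ Icc 1 (k * m), f i = ∑ a ∈ range k, ∑ b ∈ range m, f (a * m + b + 1) := by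
  rw [← Ico_add_one_right_eq_Icc, sum_Ico_eq_sum_range, Nat.add_sub_cancel]
  induction k with
  | zero => simp
  | succ k ih =>
    rw [Nat.succ_mul, sum_range_add, ih, sum_range_succ]
    exact congrArg _ (sum_congr rfl fun b _ => congrArg f (by ring))

theorem Finset.sum_range_natCast_mul_two {R : Type*} [CommRing R] (m : ℕ) :
    (∑ b ∈ range m, (b : R)) * 2 = m * (m - 1) := by
  induction m with
  | zero => simp
  | succ m ih => rw [sum_range_succ, add_mul, ih]; push_cast; ring

def blockMinima (k m : ℕ) : Finset ℕ := (Icc 1 k).image fun i => (i - 1) * m + 1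

theorem card_filter_mem_blockMinima {k m a b : ℕ} (ha : a < k) (hb : b < m) :
    #{j ∈ Icc 1 (a * m + b + 1) | j ∈ blockMinima k m} = a + 1 := by
  have hm : 0 < m := by omega
  have hstart (i : ℕ) : (i - 1) * m ≤ a * m + b ↔ i ≤ a + 1 := by
    constructor
    · intro h
      by_contra! hi
      have : (a + 1) * m ≤ (i - 1) * m := Nat.mul_le_mul_right m (by omega)
      rw [add_mul, one_mul] at this
      omega
    · intro hi
      have : (i - 1) * m ≤ a * m := Nat.mul_le_mul_right m (by omega)
      omega
  have hfilter : {j ∈ Icc 1 (a * m + b + 1) | j ∈ blockMinima k m} =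
      (Icc 1 (a + 1)).image fun i => (i - 1) * m + 1 := by
    ext j
    rw [mem_filter, blockMinima]
    simp only [mem_Icc, mem_image]
    constructor
    · rintro ⟨⟨-, hj⟩, i, ⟨hi1, -⟩, rfl⟩
      exact ⟨i, ⟨hi1, (hstart i).1 (by omega)⟩, rfl⟩
    · rintro ⟨i, ⟨hi1, hi⟩, rfl⟩
      exact ⟨⟨by omega, by have := (hstart i).2 hi; omega⟩, i, ⟨hi1, by omega⟩, rfl⟩
  have hinj : Set.InjOn (fun i => (i - 1) * m + 1) (Icc 1 (a + 1) : Set ℕ) := by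
    intro x hx y hy hxy
    simp only [coe_Icc, Set.mem_Icc] at hx hy
    have := Nat.eq_of_mul_eq_mul_right hm (Nat.add_right_cancel hxy)
    omega
  rw [hfilter, card_image_of_injOn hinj, Nat.card_Icc, Nat.add_sub_cancel]

noncomputable def cdfGap (n k : ℕ) (C : Finset ℕ) (i : ℕ) : ℝ :=
  ∑ j ∈ Icc 1 i, ((if j ∈ C then (1 : ℝ) / k else 0) - 1 / n)

theorem EMD_eq_sum_abs_cdfGap (n k : ℕ) (C : Finset ℕ) :
    EMD n k C = 1 / ((n : ℝ) - 1) * ∑ i ∈ Icc 1 n, |cdfGap n k C i| := rfl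

theorem cdfGap_blockMinima {k m a b : ℕ} (ha : a < k) (hb : b < m) :
    cdfGap (k * m) k (blockMinima k m) (a * m + b + 1) = ((m - 1 - b : ℕ) : ℝ) / (k * m) := by
  have hk : (k : ℝ) ≠ 0 := Nat.cast_ne_zero.2 (by omega)
  have hm : (m : ℝ) ≠ 0 := Nat.cast_ne_zero.2 (by omega)
  rw [cdfGap, sum_sub_distrib, ← sum_filter, sum_const, card_filter_mem_blockMinima ha hb,
    sum_const, Nat.card_Icc, Nat.add_sub_cancel, Nat.sub_sub, Nat.cast_sub (by omega)]
  simp only [nsmul_eq_mul]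
  push_cast
  field_simp
  ring

theorem sum_range_sum_range_cdfGap_blockMinima {k m : ℕ} (hk : 0 < k) (hm : 0 < m) :
    ∑ a ∈ range k, ∑ b ∈ range m, |cdfGap (k * m) k (blockMinima k m) (a * m + b + 1)| =
      ((m : ℝ) - 1) / 2 := by
  have hblock : (∑ b ∈ range m, ((m - 1 - b : ℕ) : ℝ)) * 2 = m * (m - 1) := by
    rw [sum_range_reflect (fun b => (b : ℝ)), sum_range_natCast_mul_two]
  have hinner (a : ℕ) (ha : a ∈ range k) :
      ∑ b ∈ range m, |cdfGap (k * m) k (blockMinima k m) (a * m + b + 1)| =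
        ((m : ℝ) - 1) / (2 * k) := by
    rw [sum_congr rfl fun b hb => by
      rw [cdfGap_blockMinima (mem_range.1 ha) (mem_range.1 hb), abs_of_nonneg (by positivity)],
      ← sum_div]
    field_simp
    linear_combination hblock
  rw [sum_congr rfl hinner, sum_const, card_range, nsmul_eq_mul]
  field_simp

theorem EMD_blockMinima {k m : ℕ} (hk : 0 < k) (hm : 0 < m) :
    EMD (k * m) k (blockMinima k m) = ((m : ℝ) - 1) / (2 * ((k : ℝ) * m - 1)) := by
  rw [EMD_eq_sum_abs_cdfGap, sum_Icc_one_mul_eq_sum_range_sum_range,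
    sum_range_sum_range_cdfGap_blockMinima hk hm, one_div_mul_eq_div, div_div, Nat.cast_mul]

theorem emd_upper_bound_attained_minima_general (n k m : ℕ) (hn : 2 ≤ n)
    (hdvd : k ∣ n) (hm : m = n / k)
    (C : Finset ℕ)
    (hC : C = (Finset.Icc 1 k).image (fun i => (i - 1) * m + 1)) :
    EMD n k C = ((n : ℝ) - k) / (2 * ((n : ℝ) - 1) * k) := by
  have hkm : k * m = n := hm ▸ Nat.mul_div_cancel' hdvd
  have hk : 0 < k := Nat.pos_of_ne_zero fun hk => by subst hk; omega
  have hm0 : 0 < m := Nat.pos_of_ne_zero fun hm0 => by subst hm0; omega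
  have hkR : (k : ℝ) ≠ 0 := Nat.cast_ne_zero.2 hk.ne'
  subst hkm hC
  rw [← blockMinima, EMD_blockMinima hk hm0]
  push_cast
  field_simp

/-- If `k ∣ n` and `m = n/k`, the cluster consisting of the smallest position
`(i−1)m+1` of each of the `k` consecutive blocks of `m` positions attains the
upper bound: its EMD equals `(n−k)/(2(n−1)k)`. -/
theorem emd_upper_bound_attained_minima (n k m : ℕ) (hn : 2 ≤ n) (hk : 1 ≤ k)
    (hdvd : k ∣ n) (hm : m = n / k)
    (C : Finset ℕ)
    (hC : C = (Finset.Icc 1 k).image (fun i => (i - 1) * m + 1)) :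
    EMD n k C = ((n : ℝ) - k) / (2 * ((n : ℝ) - 1) * k) :=
  emd_upper_bound_attained_minima_general n k m hn hdvd hm C hC
end

section
/- Let n ≥ 2 and k ≥ 1 be integers with k dividing n, and set m = n/k. For the cluster C = { i·m : i = 1,…,k } consisting of the largest position of each of the k consecutive blocks of m positions, EMD(C) = (n−k) / (2·(n−1)·k); i.e., the upper bound (n−k)/(2(n−1)k) for clusters containing one record per block is also attained by the cluster of block maxima. -/
/-!
Write `n = k m`. The first `i` positions contain `⌊i/m⌋` block maxima, so the `i`-th partial sum
in `EMD` is `⌊i/m⌋/k - i/(km) = -(i mod m)/n`. Summing `i mod m` over `1 ≤ i ≤ km` runs `k` times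
through `0, …, m-1`, giving `k m (m-1)/2`, hence `EMD = (m-1)/(2(n-1)) = (n-k)/(2(n-1)k)`.
-/

open Finset

theorem Nat.sum_range_mul_mod (k m : ℕ) : ∑ i ∈ range (k * m), i % m = k * ∑ i ∈ range m, i := by
  induction k with
  | zero => simp
  | succ k ih =>
    rw [Nat.succ_mul, sum_range_add, ih, Nat.succ_mul]
    congr 1
    exact sum_congr rfl fun i hi => Nat.mul_add_mod_of_lt (mem_range.mp hi)

theorem Nat.sum_Icc_one_mul_mod (k m : ℕ) :
    ∑ i ∈ Icc 1 (k * m), i % m = k * ∑ i ∈ range m, i := by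
  have h := sum_range_eq_add_Ico (fun i => i % m) (show 0 < k * m + 1 by omega)
  rw [sum_range_succ, Nat.mul_mod_left, Ico_add_one_right_eq_Icc, Nat.sum_range_mul_mod] at h
  simpa using h.symm

def blockMaxima (k m : ℕ) : Finset ℕ := (Icc 1 k).image (· * m)

theorem Icc_one_inter_blockMaxima {k m i : ℕ} (hm : 0 < m) (hi : i ≤ k * m) :
    Icc 1 i ∩ blockMaxima k m = {x ∈ Ioc 0 i | m ∣ x} := by
  ext x
  simp only [blockMaxima, mem_inter, mem_Icc, mem_image, mem_filter, mem_Ioc]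
  constructor
  · rintro ⟨⟨hx, hxi⟩, j, -, rfl⟩
    exact ⟨⟨hx, hxi⟩, dvd_mul_left m j⟩
  · rintro ⟨⟨hx, hxi⟩, j, rfl⟩
    refine ⟨⟨hx, hxi⟩, j, ⟨Nat.pos_of_mul_pos_left hx, ?_⟩, Nat.mul_comm j m⟩
    exact Nat.le_of_mul_le_mul_right (by linarith) hm

theorem card_Icc_one_inter_blockMaxima {k m i : ℕ} (hm : 0 < m) (hi : i ≤ k * m) :
    #(Icc 1 i ∩ blockMaxima k m) = i / m := by
  rw [Icc_one_inter_blockMaxima hm hi, Nat.Ioc_filter_dvd_card_eq_div]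

theorem abs_partialSum_blockMaxima {k m i : ℕ} (hk : 0 < k) (hm : 0 < m) (hi : i ≤ k * m) :
    |∑ j ∈ Icc 1 i, ((if j ∈ blockMaxima k m then (1 : ℝ) / k else 0) - 1 / (k * m : ℕ))|
      = (i % m : ℕ) / (k * m : ℕ) := by
  rw [sum_sub_distrib, sum_ite_mem, sum_const, card_Icc_one_inter_blockMaxima hm hi, sum_const,
    Nat.card_Icc, Nat.add_sub_cancel, nsmul_eq_mul, nsmul_eq_mul]
  have hk' : (k : ℝ) ≠ 0 := by positivity
  have hm' : (m : ℝ) ≠ 0 := by positivity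
  have hdiv : (i : ℝ) = m * (i / m : ℕ) + (i % m : ℕ) := by
    exact_mod_cast (Nat.div_add_mod i m).symm
  have hpartial : ((i / m : ℕ) : ℝ) * (1 / k) - i * (1 / (k * m : ℕ))
      = -((i % m : ℕ) / (k * m : ℕ)) := by
    rw [hdiv]; push_cast; field_simp; ring
  rw [hpartial, abs_neg, abs_of_nonneg (by positivity)]

theorem EMD_blockMaxima {k m : ℕ} (hk : 0 < k) (hm : 0 < m) :
    EMD (k * m) k (blockMaxima k m) = ((m : ℝ) - 1) / (2 * ((k * m : ℕ) - 1)) := by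
  rw [EMD, sum_congr rfl fun i hi => abs_partialSum_blockMaxima hk hm (mem_Icc.mp hi).2,
    ← sum_div, ← Nat.cast_sum, Nat.sum_Icc_one_mul_mod]
  have hGauss : ((∑ i ∈ range m, i : ℕ) : ℝ) * 2 = m * (m - 1) := by
    rw [← Nat.cast_pred hm]; exact_mod_cast sum_range_id_mul_two m
  have hmean : ((k * ∑ i ∈ range m, i : ℕ) : ℝ) / (k * m : ℕ) = ((m : ℝ) - 1) / 2 := by
    have hk' : (k : ℝ) ≠ 0 := by positivity
    have hm' : (m : ℝ) ≠ 0 := by positivity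
    push_cast at hGauss ⊢
    field_simp
    linear_combination hGauss
  rw [hmean, one_div_mul_eq_div, div_div, mul_comm]

theorem emd_upper_bound_attained_maxima_general (n k m : ℕ) (hn : 2 ≤ n)
    (hdvd : k ∣ n) (hm : m = n / k)
    (C : Finset ℕ)
    (hC : C = (Finset.Icc 1 k).image (fun i => i * m)) :
    EMD n k C = ((n : ℝ) - k) / (2 * ((n : ℝ) - 1) * k) := by
  obtain ⟨m', rfl⟩ := hdvd
  have hk : 0 < k := Nat.pos_of_ne_zero (by rintro rfl; omega)
  have hm' : 0 < m' := Nat.pos_of_ne_zero (by rintro rfl; omega)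
  obtain rfl : m = m' := by rw [hm, Nat.mul_div_cancel_left _ hk]
  subst hC
  rw [show (Icc 1 k).image (· * m) = blockMaxima k m from rfl, EMD_blockMaxima hk hm',
    show ((k * m : ℕ) : ℝ) - k = (m - 1) * k by push_cast; ring,
    mul_div_mul_right _ _ (by positivity)]

/-- If `k ∣ n` and `m = n/k`, the cluster consisting of the largest position
`im` of each of the `k` consecutive blocks of `m` positions attains the
upper bound: its EMD equals `(n−k)/(2(n−1)k)`. -/
theorem emd_upper_bound_attained_maxima (n k m : ℕ) (hn : 2 ≤ n) (hk : 1 ≤ k)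
    (hdvd : k ∣ n) (hm : m = n / k)
    (C : Finset ℕ)
    (hC : C = (Finset.Icc 1 k).image (fun i => i * m)) :
    EMD n k C = ((n : ℝ) - k) / (2 * ((n : ℝ) - 1) * k) :=
  emd_upper_bound_attained_maxima_general n k m hn hdvd hm C hC
end

section
/- Let n ≥ 2 and k ≥ 1 be integers with k dividing n, let m = n/k, and let t > 0 be a real number with k ≥ n / (2·(n−1)·t + 1). If C ⊆ {1,…,n} contains exactly one element of each of the k consecutive blocks S_i = {(i−1)·m+1, …, i·m} (i = 1,…,k), then EMD(C) ≤ t; i.e., every cluster built by taking one record per block satisfies t-closeness by design. -/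
open Finset

/-!
Let `F i = cdfDiff C k n i` be the inner sum in `EMD`, the difference at `i` of the distribution
functions of the two uniform distributions. At a block boundary `j * m` the cluster has used
exactly `j` of its `k` records, so `F (j * m) = 0`. Inside a block whose record sits at offset
`s + 1`, `n * F` at offset `r` is `-r` before the record and `m - r` from it on; hence a block
contributes at most `(1 + ⋯ + (m - 1)) / n`, the worst case being a record at either end of the
block. Summing over the `k = n / m` blocks gives `∑ |F i| ≤ (m - 1) / 2`, and the hypothesis on
`k` says exactly that `m ≤ 2 (n - 1) t + 1`.
-/

lemma two_mul_sum_Ioc_natCast (a b : ℕ) (hab : a ≤ b) :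
    2 * ∑ r ∈ Ioc a b, (r : ℝ) = b * (b + 1) - a * (a + 1) := by
  induction b, hab using Nat.le_induction with
  | base => simp
  | succ b hab ih =>
    rw [sum_Ioc_succ_top hab, mul_add, ih]
    push_cast
    ring

lemma sum_Ioc_abs_sawtooth_le (m s : ℕ) (hs : s < m) :
    ∑ r ∈ Ioc 0 m, |(if s < r then (m : ℝ) else 0) - r| ≤ m * (m - 1) / 2 := by
  have hleft : ∑ r ∈ Ioc 0 s, |(if s < r then (m : ℝ) else 0) - r|
      = ∑ r ∈ Ioc 0 s, (r : ℝ) := by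
    refine sum_congr rfl fun r hr => ?_
    rw [if_neg (not_lt.2 (mem_Ioc.1 hr).2), zero_sub, abs_neg, Nat.abs_cast]
  have hright : ∑ r ∈ Ioc s m, |(if s < r then (m : ℝ) else 0) - r|
      = (m - s) * m - ∑ r ∈ Ioc s m, (r : ℝ) := by
    rw [← Nat.cast_sub hs.le, ← Nat.card_Ioc, ← nsmul_eq_mul, ← sum_const, ← sum_sub_distrib]
    refine sum_congr rfl fun r hr => ?_
    rw [mem_Ioc] at hr
    rw [if_pos hr.1, abs_of_nonneg (sub_nonneg.2 (by exact_mod_cast hr.2))]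
  have hs' : (s : ℝ) + 1 ≤ m := by exact_mod_cast hs
  rw [← sum_Ioc_consecutive _ (Nat.zero_le s) hs.le, hleft, hright]
  have h0 := two_mul_sum_Ioc_natCast 0 s (Nat.zero_le s)
  have h1 := two_mul_sum_Ioc_natCast s m hs.le
  push_cast at h0
  nlinarith [s.cast_nonneg (α := ℝ)]

lemma sum_Ioc_zero_mul_le {M : Type*} [AddCommMonoid M] [PartialOrder M] [IsOrderedAddMonoid M]
    (g : ℕ → M) (m k : ℕ) (B : M) (h : ∀ j < k, ∑ i ∈ Ioc (j * m) (j * m + m), g i ≤ B) :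
    ∑ i ∈ Ioc 0 (k * m), g i ≤ k • B := by
  induction k with
  | zero => simp
  | succ k ih =>
    rw [succ_nsmul, Nat.succ_mul, ← sum_Ioc_consecutive _ (Nat.zero_le _) (Nat.le_add_right _ _)]
    exact add_le_add (ih fun j hj => h j (by omega)) (h k (by omega))

lemma card_inter_Ioc_eq_ite {C : Finset ℕ} {a b c x : ℕ} (h : C ∩ Ioc a b = {c}) (hx : x ≤ b) :
    #(C ∩ Ioc a x) = if c ≤ x then 1 else 0 := by
  have : C ∩ Ioc a x = C ∩ Ioc a b ∩ Iic x := by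
    rw [inter_assoc]; congr 1; ext y; simp only [mem_inter, mem_Ioc, mem_Iic]; omega
  rw [this, h]
  by_cases hc : c ≤ x <;> simp [hc]

lemma Icc_one_eq_Ioc_zero (i : ℕ) : Icc 1 i = Ioc 0 i := Icc_add_one_left_eq_Ioc 0 i

section
variable {C : Finset ℕ} {k n m : ℕ}

variable (C k n) in
noncomputable def cdfDiff (i : ℕ) : ℝ :=
  ∑ j ∈ Icc 1 i, ((if j ∈ C then (1 : ℝ) / k else 0) - 1 / n)

variable (C k n) in
lemma cdfDiff_add (a d : ℕ) :
    cdfDiff C k n (a + d) = cdfDiff C k n a + #(C ∩ Ioc a (a + d)) / k - d / n := by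
  simp only [cdfDiff, Icc_one_eq_Ioc_zero]
  rw [← sum_Ioc_consecutive _ (Nat.zero_le a) (Nat.le_add_right a d), add_sub_assoc]
  congr 1
  rw [sum_sub_distrib, sum_ite_mem, sum_const, sum_const, Nat.card_Ioc, Nat.add_sub_cancel_left,
    inter_comm, nsmul_eq_mul, nsmul_eq_mul, mul_one_div, mul_one_div]

lemma cdfDiff_mul_eq_zero (hkm : k * m = n)
    (hblocks : ∀ j < k, #(C ∩ Ioc (j * m) (j * m + m)) = 1) :
    ∀ j ≤ k, cdfDiff C k n (j * m) = 0
  | 0, _ => by simp [cdfDiff]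
  | j + 1, hj => by
    have hm : m ≠ 0 := by rintro rfl; simpa using hblocks j hj
    have hk : k ≠ 0 := by omega
    rw [Nat.succ_mul, cdfDiff_add, cdfDiff_mul_eq_zero hkm hblocks j (by omega), hblocks j hj, ← hkm]
    push_cast
    field_simp
    ring

lemma cdfDiff_add_of_inter_eq_singleton (hkm : k * m = n) (hk : k ≠ 0) {a s r : ℕ}
    (ha : cdfDiff C k n a = 0) (h : C ∩ Ioc a (a + m) = {a + s + 1}) (hr : r ≤ m) :
    cdfDiff C k n (a + r) = ((if s < r then (m : ℝ) else 0) - r) / n := by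
  have hm : m ≠ 0 := by rintro rfl; simp at h
  rw [cdfDiff_add, ha, card_inter_Ioc_eq_ite h (by omega), ← hkm]
  simp only [show a + s + 1 ≤ a + r ↔ s < r by omega]
  split_ifs <;> push_cast <;> field_simp <;> ring

lemma sum_Ioc_abs_cdfDiff_le (hkm : k * m = n) (hk : k ≠ 0) {a : ℕ}
    (ha : cdfDiff C k n a = 0) (h : #(C ∩ Ioc a (a + m)) = 1) :
    ∑ i ∈ Ioc a (a + m), |cdfDiff C k n i| ≤ m * (m - 1) / 2 / n := by
  obtain ⟨c, hc⟩ := card_eq_one.1 h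
  have hcmem : c ∈ Ioc a (a + m) := (mem_inter.1 (hc ▸ mem_singleton_self c)).2
  rw [mem_Ioc] at hcmem
  obtain ⟨s, rfl⟩ : ∃ s, c = a + s + 1 := ⟨c - a - 1, by omega⟩
  have hcdf : ∀ r ∈ Ioc 0 m, |cdfDiff C k n (a + r)| = |(if s < r then (m : ℝ) else 0) - r| / n :=
    fun r hr => by
      rw [cdfDiff_add_of_inter_eq_singleton hkm hk ha hc (mem_Ioc.1 hr).2, abs_div, Nat.abs_cast]
  calc ∑ i ∈ Ioc a (a + m), |cdfDiff C k n i|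
      = ∑ r ∈ Ioc 0 m, |cdfDiff C k n (a + r)| := by
        have hshift := map_add_left_Ioc 0 m a
        rw [add_zero] at hshift
        rw [← hshift, sum_map]
        rfl
    _ = (∑ r ∈ Ioc 0 m, |(if s < r then (m : ℝ) else 0) - r|) / n := by
        rw [sum_congr rfl hcdf, sum_div]
    _ ≤ m * (m - 1) / 2 / n := by
        gcongr
        exact sum_Ioc_abs_sawtooth_le m s (by omega)

lemma sum_abs_cdfDiff_le (hkm : k * m = n) (hn : n ≠ 0)
    (hblocks : ∀ j < k, #(C ∩ Ioc (j * m) (j * m + m)) = 1) :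
    ∑ i ∈ Icc 1 n, |cdfDiff C k n i| ≤ (m - 1) / 2 := by
  have hk : k ≠ 0 := left_ne_zero_of_mul (hkm ▸ hn)
  have hm : m ≠ 0 := right_ne_zero_of_mul (hkm ▸ hn)
  calc ∑ i ∈ Icc 1 n, |cdfDiff C k n i|
      ≤ k • ((m : ℝ) * (m - 1) / 2 / n) := by
        have hsum := sum_Ioc_zero_mul_le (fun i => |cdfDiff C k n i|) m k _ fun j hj =>
          sum_Ioc_abs_cdfDiff_le hkm hk (cdfDiff_mul_eq_zero hkm hblocks j hj.le) (hblocks j hj)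
        rwa [hkm, ← Icc_one_eq_Ioc_zero] at hsum
    _ = (m - 1) / 2 := by
        rw [nsmul_eq_mul, ← hkm]
        push_cast
        field_simp

end

theorem one_record_per_block_is_t_close_general (n k m : ℕ) (hn : 2 ≤ n)
    (hdvd : k ∣ n) (hm : m = n / k) (t : ℝ) (ht : 0 < t)
    (hkt : (n : ℝ) / (2 * ((n : ℝ) - 1) * t + 1) ≤ (k : ℝ))
    (C : Finset ℕ)
    (hone : ∀ i ∈ Finset.Icc 1 k,
      (C ∩ Finset.Icc ((i - 1) * m + 1) (i * m)).card = 1) :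
    EMD n k C ≤ t := by
  have hkm : k * m = n := by rw [hm, Nat.mul_div_cancel' hdvd]
  have hblocks : ∀ j < k, #(C ∩ Ioc (j * m) (j * m + m)) = 1 := fun j hj => by
    simpa [add_one_mul, Icc_add_one_left_eq_Ioc] using hone (j + 1) (by simp; omega)
  have hn1 : (0 : ℝ) < n - 1 := by
    have : (2 : ℝ) ≤ n := by exact_mod_cast hn
    linarith
  have hm_le : (m : ℝ) ≤ 2 * (n - 1) * t + 1 := by
    have hk : (0 : ℝ) < k := by exact_mod_cast Nat.pos_of_dvd_of_pos hdvd (by omega)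
    rw [div_le_iff₀ (by positivity)] at hkt
    refine le_of_mul_le_mul_left ?_ hk
    rw [← Nat.cast_mul, hkm]
    exact hkt
  calc EMD n k C = (∑ i ∈ Icc 1 n, |cdfDiff C k n i|) / (n - 1) := one_div_mul_eq_div _ _
    _ ≤ ((m - 1) / 2) / (n - 1) := by
        gcongr
        exact sum_abs_cdfDiff_le hkm (by omega) hblocks
    _ ≤ t := by
        rw [div_le_iff₀ hn1]
        linarith

/-- If `k ∣ n`, `m = n/k`, `t > 0` with `k ≥ n/(2(n−1)t+1)`, then every
cluster `C ⊆ {1,…,n}` containing exactly one element of each consecutive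
block `S_i = {(i−1)m+1, …, im}` satisfies `EMD(C) ≤ t`, i.e. it satisfies
`t`-closeness by design. -/
theorem one_record_per_block_is_t_close (n k m : ℕ) (hn : 2 ≤ n) (hk : 1 ≤ k)
    (hdvd : k ∣ n) (hm : m = n / k) (t : ℝ) (ht : 0 < t)
    (hkt : (n : ℝ) / (2 * ((n : ℝ) - 1) * t + 1) ≤ (k : ℝ))
    (C : Finset ℕ) (hC : C ⊆ Finset.Icc 1 n)
    (hone : ∀ i ∈ Finset.Icc 1 k,
      (C ∩ Finset.Icc ((i - 1) * m + 1) (i * m)).card = 1)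
    (hcard : C.card = k) :
    EMD n k C ≤ t :=
  one_record_per_block_is_t_close_general n k m hn hdvd hm t ht hkt C hone
end

section
/- Let n ≥ k ≥ 1 be natural numbers, let q = ⌊n/k⌋ and r = n mod k, and let k' = k + ⌊r/q⌋ be the adjusted cluster size. Then n mod k' < ⌊n/k'⌋; i.e., after the adjustment, the number of leftover records is strictly smaller than the number of clusters of size k' that can be formed, so each leftover record can be assigned to a distinct cluster. -/
/-- After adjusting the cluster size from `k` to `k' = k + ⌊(n mod k)/⌊n/k⌋⌋`,
the number of leftover records `n mod k'` is strictly smaller than the number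
`⌊n/k'⌋` of clusters of size `k'` that can be formed, so each leftover record
can be assigned to a distinct cluster. -/
theorem adjusted_cluster_size (n k : ℕ) (hk : 1 ≤ k) (hkn : k ≤ n) :
    n % (k + (n % k) / (n / k)) < n / (k + (n % k) / (n / k)) := by
  have key : ∀ q r : ℕ, 1 ≤ q → k * q + r = n →
      n % (k + r / q) < n / (k + r / q) := by
    intro q r hq1 hsum
    have hd : q * (r / q) + r % q = r := Nat.div_add_mod r q
    have hm : r % q < q := Nat.mod_lt r (by omega)
    have hmuladd : q * (k + r / q) = q * k + q * (r / q) := Nat.mul_add q k (r / q)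
    have hkq : q * k = k * q := Nat.mul_comm q k
    have h2 : q * (k + r / q) ≤ n := by omega
    have hqle : q ≤ n / (k + r / q) :=
      (Nat.le_div_iff_mul_le (Nat.lt_of_lt_of_le hk (Nat.le_add_right k _))).mpr h2
    have h3 : q * (k + r / q) ≤ n / (k + r / q) * (k + r / q) :=
      Nat.mul_le_mul_right _ hqle
    have hmod : n % (k + r / q) + n / (k + r / q) * (k + r / q) = n :=
      Nat.mod_add_div' n (k + r / q)
    omega
  exact key (n / k) (n % k) ((Nat.one_le_div_iff (by omega)).mpr hkn)
    (Nat.div_add_mod n k)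
end

section
/- Let n ≥ 2 and k ≥ 1 be integers with k dividing n, and set m = n/k. Then there exists a partition of {1,…,n} into m clusters, each of size exactly k and each containing exactly one element from every consecutive block S_i = {(i−1)·m+1, …, i·m} (i = 1,…,k), such that every cluster C of the partition satisfies EMD(C) ≤ (n−k)/(2·(n−1)·k). In particular, for any real t > 0 with k ≥ n/(2(n−1)t+1), the resulting partition is simultaneously k-anonymous and t-close. -/
/-!
Cluster `b < m` is the residue class `{b + 1, b + 1 + m, …, b + 1 + (k - 1) m}`, which meets
every block of `m` consecutive records exactly once. Hence the cumulative discrepancy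
`#(C ∩ [1, i]) / k - i / n` at `i = q m + s + 1` equals `([b ≤ s] m - (s + 1)) / n`,
independently of `q`, and summing its absolute value over one period gives the triangular numbers
`T(b) + T(m - 1 - b) ≤ T(m - 1)`, i.e. `EMD ≤ (m - 1) / (2 (n - 1)) = (n - k) / (2 (n - 1) k)`.
-/

open Finset

theorem Nat.add_mul_le_add_mul_iff {b s d j q : ℕ} (hb : b < d) (hs : s < d) :
    b + j * d ≤ s + q * d ↔ j < q ∨ j = q ∧ b ≤ s := by
  rcases lt_trichotomy j q with h | rfl | h
  · have : (j + 1) * d ≤ q * d := Nat.mul_le_mul_right d h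
    simp only [h, true_or, iff_true]
    nlinarith
  · simp
  · have : (q + 1) * d ≤ j * d := Nat.mul_le_mul_right d h
    simp only [h.not_gt, h.ne', false_and, or_self, iff_false, not_le]
    nlinarith

theorem Nat.eq_and_eq_of_add_mul_eq_add_mul {b b' d j j' : ℕ} (hb : b < d) (hb' : b' < d)
    (h : b + j * d = b' + j' * d) : b = b' ∧ j = j' := by
  have := (add_mul_le_add_mul_iff hb hb').1 h.le
  have := (add_mul_le_add_mul_iff hb' hb).1 h.ge
  omega

theorem Finset.sum_Icc_one_eq_sum_range {M : Type*} [AddCommMonoid M] (f : ℕ → M) (n : ℕ) :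
    ∑ i ∈ Icc 1 n, f i = ∑ i ∈ range n, f (i + 1) := by
  rw [← Ico_add_one_right_eq_Icc, sum_Ico_eq_sum_range, add_tsub_cancel_right]
  simp only [add_comm]

theorem Finset.sum_range_mul {M : Type*} [AddCommMonoid M] (f : ℕ → M) (k d : ℕ) :
    ∑ i ∈ range (k * d), f i = ∑ q ∈ range k, ∑ s ∈ range d, f (s + q * d) := by
  induction k with
  | zero => simp
  | succ k ih =>
    rw [Nat.succ_mul, sum_range_add, ih, sum_range_succ]
    simp only [add_comm (k * d)]

theorem sum_range_natCast_add_one {K : Type*} [Field K] [CharZero K] (n : ℕ) :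
    ∑ s ∈ range n, ((s : K) + 1) = n * (n + 1) / 2 := by
  induction n with
  | zero => simp
  | succ n ih => rw [sum_range_succ, ih]; push_cast; ring

theorem sum_range_abs_ite_sub_le {b m : ℕ} (hb : b < m) :
    ∑ s ∈ range m, |(if b ≤ s then (m : ℝ) else 0) - (s + 1)| ≤ m * (m - 1) / 2 := by
  obtain ⟨c, rfl⟩ : ∃ c, m = b + c := ⟨m - b, by omega⟩
  have hlow : ∑ s ∈ range b, |(if b ≤ s then ((b + c : ℕ) : ℝ) else 0) - (s + 1)|
      = ∑ s ∈ range b, ((s : ℝ) + 1) := by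
    refine sum_congr rfl fun s hs => ?_
    rw [if_neg (by simpa using hs), zero_sub, abs_neg, abs_of_pos (by positivity)]
  have hhigh :
      ∑ t ∈ range c, |(if b ≤ b + t then ((b + c : ℕ) : ℝ) else 0) - ((b + t : ℕ) + 1)|
        = ∑ t ∈ range c, ((c : ℝ) - ((t : ℝ) + 1)) := by
    refine sum_congr rfl fun t ht => ?_
    have : (t : ℝ) + 1 ≤ c := by exact_mod_cast mem_range.1 ht
    rw [if_pos (Nat.le_add_right b t), abs_of_nonneg (by push_cast; linarith)]
    push_cast
    ring
  rw [sum_range_add, hlow, hhigh, sum_sub_distrib, sum_const, card_range, nsmul_eq_mul,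
    sum_range_natCast_add_one, sum_range_natCast_add_one]
  have : (1 : ℝ) ≤ c := by exact_mod_cast (show 1 ≤ c by omega)
  push_cast
  nlinarith [(b.cast_nonneg : (0 : ℝ) ≤ b)]

theorem sum_Icc_ite_mem_sub (C : Finset ℕ) (k n i : ℕ) :
    ∑ j ∈ Icc 1 i, ((if j ∈ C then (1 : ℝ) / k else 0) - 1 / n)
      = #(Icc 1 i ∩ C) / k - i / n := by
  rw [sum_sub_distrib, sum_ite_mem, sum_const, sum_const, Nat.card_Icc, add_tsub_cancel_right,
    nsmul_eq_mul, nsmul_eq_mul]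
  ring

def arithProg (a d k : ℕ) : Finset ℕ := (range k).image fun j => a + j * d

section arithProg

variable {a b d k : ℕ}

theorem mem_arithProg {x : ℕ} : x ∈ arithProg a d k ↔ ∃ j < k, a + j * d = x := by
  simp [arithProg]

theorem card_arithProg (hd : 0 < d) : #(arithProg a d k) = k := by
  rw [arithProg, card_image_of_injective _ fun j j' h =>
    Nat.eq_of_mul_eq_mul_right hd (Nat.add_left_cancel h), card_range]

theorem arithProg_subset_Icc (hb : b < d) : arithProg (b + 1) d k ⊆ Icc 1 (k * d) := by
  intro x hx
  obtain ⟨j, hj, rfl⟩ := mem_arithProg.1 hx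
  have : (j + 1) * d ≤ k * d := Nat.mul_le_mul_right d hj
  simp only [mem_Icc]
  constructor <;> nlinarith

theorem mem_arithProg_mod {x : ℕ} (hx : x ∈ Icc 1 (k * d)) :
    x ∈ arithProg ((x - 1) % d + 1) d k := by
  rw [mem_Icc] at hx
  refine mem_arithProg.2 ⟨(x - 1) / d, (Nat.div_lt_iff_lt_mul (by nlinarith)).2 (by omega), ?_⟩
  have := Nat.mod_add_div' (x - 1) d
  omega

theorem card_arithProg_inter_Icc_mul {i : ℕ} (hb : b < d) (hi : i ∈ Icc 1 k) :
    #(arithProg (b + 1) d k ∩ Icc ((i - 1) * d + 1) (i * d)) = 1 := by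
  rw [mem_Icc] at hi
  obtain ⟨q, rfl⟩ : ∃ q, i = q + 1 := ⟨i - 1, by omega⟩
  rw [card_eq_one]
  refine ⟨b + 1 + q * d, ?_⟩
  ext x
  simp only [mem_inter, mem_arithProg, mem_Icc, mem_singleton, add_tsub_cancel_right]
  constructor
  · rintro ⟨⟨j, -, rfl⟩, hlow, hhigh⟩
    have := (Nat.add_mul_le_add_mul_iff (j := q) (q := j) (show 0 < d by omega) hb).1
      (show 0 + q * d ≤ b + j * d by omega)
    have := (Nat.add_mul_le_add_mul_iff (s := d - 1) hb (show d - 1 < d by omega)).1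
      (show b + j * d ≤ d - 1 + q * d by rw [add_one_mul] at hhigh; omega)
    obtain rfl : j = q := by omega
    rfl
  · rintro rfl
    refine ⟨⟨q, by omega, rfl⟩, by omega, ?_⟩
    rw [add_one_mul]
    omega

theorem card_Icc_inter_arithProg {s q : ℕ} (hb : b < d) (hs : s < d) (hq : q < k) :
    #(Icc 1 (s + q * d + 1) ∩ arithProg (b + 1) d k) = q + if b ≤ s then 1 else 0 := by
  have : Icc 1 (s + q * d + 1) ∩ arithProg (b + 1) d k
      = (range (q + if b ≤ s then 1 else 0)).image fun j => b + 1 + j * d := by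
    ext x
    simp only [mem_inter, mem_Icc, arithProg, mem_image, mem_range]
    constructor
    · rintro ⟨⟨-, hx⟩, j, -, rfl⟩
      have := (Nat.add_mul_le_add_mul_iff (j := j) (q := q) hb hs).1 (by omega)
      exact ⟨j, by split_ifs <;> omega, rfl⟩
    · rintro ⟨j, hj, rfl⟩
      have := (Nat.add_mul_le_add_mul_iff (j := j) (q := q) hb hs).2
        (by split_ifs at hj <;> omega)
      exact ⟨⟨by omega, by omega⟩, j, by split_ifs at hj <;> omega, rfl⟩
  rw [this, card_image_of_injective _ fun j j' h =>
    Nat.eq_of_mul_eq_mul_right (by omega) (Nat.add_left_cancel h), card_range]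

end arithProg

def residueClusters (d k : ℕ) : Finset (Finset ℕ) :=
  (range d).image fun b => arithProg (b + 1) d k

section residueClusters

variable {d k : ℕ}

theorem card_residueClusters (hk : 0 < k) : #(residueClusters d k) = d := by
  refine (card_image_of_injOn fun b hb b' hb' h => ?_).trans (card_range d)
  have hmem : b + 1 ∈ arithProg (b' + 1) d k := h ▸ mem_arithProg.2 ⟨0, hk, by simp⟩
  obtain ⟨j, -, hj⟩ := mem_arithProg.1 hmem
  exact (Nat.eq_and_eq_of_add_mul_eq_add_mul (j := 0) (j' := j) (mem_range.1 hb)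
    (mem_range.1 hb') (by omega)).1

theorem existsUnique_mem_residueClusters {x : ℕ} (hx : x ∈ Icc 1 (k * d)) :
    ∃! C, C ∈ residueClusters d k ∧ x ∈ C := by
  have hd : 0 < d := Nat.pos_of_mul_pos_left (a := k) (by simp only [mem_Icc] at hx; omega)
  refine ⟨arithProg ((x - 1) % d + 1) d k,
    ⟨mem_image_of_mem _ (mem_range.2 (Nat.mod_lt _ hd)), mem_arithProg_mod hx⟩, ?_⟩
  rintro _ ⟨hC, hxC⟩
  obtain ⟨b, hb, rfl⟩ := mem_image.1 hC
  obtain ⟨j, -, rfl⟩ := mem_arithProg.1 hxC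
  rw [show b + 1 + j * d - 1 = b + j * d by omega, Nat.add_mul_mod_self_right,
    Nat.mod_eq_of_lt (mem_range.1 hb)]

end residueClusters

theorem EMD_arithProg {b m k : ℕ} (hb : b < m) (hk : 0 < k) :
    EMD (k * m) k (arithProg (b + 1) m k)
      = (∑ s ∈ range m, |(if b ≤ s then (m : ℝ) else 0) - (s + 1)|)
          / ((((k * m : ℕ) : ℝ) - 1) * m) := by
  have hk0 : (k : ℝ) ≠ 0 := by positivity
  have hm0 : (m : ℝ) ≠ 0 := by
    have : 0 < m := by omega
    positivity
  have hkm : (0 : ℝ) < k * m := by positivity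
  have hterm : ∀ q ∈ range k, ∀ s ∈ range m,
      |∑ j ∈ Icc 1 (s + q * m + 1),
          ((if j ∈ arithProg (b + 1) m k then (1 : ℝ) / k else 0) - 1 / (k * m : ℕ))|
        = |(if b ≤ s then (m : ℝ) else 0) - (s + 1)| / (k * m) := by
    intro q hq s hs
    rw [sum_Icc_ite_mem_sub, card_Icc_inter_arithProg hb (mem_range.1 hs) (mem_range.1 hq),
      ← abs_of_pos hkm, ← abs_div]
    congr 1
    push_cast
    split_ifs <;> field_simp <;> ring
  rw [EMD, sum_Icc_one_eq_sum_range, sum_range_mul,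
    sum_congr rfl fun q hq => sum_congr rfl fun s hs => hterm q hq s hs]
  rw [sum_const, card_range, nsmul_eq_mul, ← sum_div]
  field_simp

theorem EMD_arithProg_le {b m k : ℕ} (hb : b < m) (hk : 0 < k) (hn : 2 ≤ k * m) :
    EMD (k * m) k (arithProg (b + 1) m k)
      ≤ (((k * m : ℕ) : ℝ) - k) / (2 * (((k * m : ℕ) : ℝ) - 1) * k) := by
  have hn' : (2 : ℝ) ≤ k * m := by exact_mod_cast hn
  have hm : (0 : ℝ) < m := by exact_mod_cast (show 0 < m by omega)
  have hk' : (0 : ℝ) < k := by exact_mod_cast hk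
  have hden : (0 : ℝ) < (((k * m : ℕ) : ℝ) - 1) * m := by push_cast; nlinarith
  calc EMD (k * m) k (arithProg (b + 1) m k)
      ≤ (m * (m - 1) / 2) / ((((k * m : ℕ) : ℝ) - 1) * m) := by
        rw [EMD_arithProg hb hk]
        exact div_le_div_of_nonneg_right (sum_range_abs_ite_sub_le hb) hden.le
    _ = (((k * m : ℕ) : ℝ) - k) / (2 * (((k * m : ℕ) : ℝ) - 1) * k) := by
        push_cast at hden ⊢
        field_simp

theorem sub_div_le_of_div_two_mul_add_one_le {n k t : ℝ} (hn : 1 < n) (hk : 0 < k) (ht : 0 < t)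
    (h : n / (2 * (n - 1) * t + 1) ≤ k) : (n - k) / (2 * (n - 1) * k) ≤ t := by
  have hnt : 0 < (n - 1) * t := mul_pos (by linarith) ht
  rw [div_le_iff₀ (by linarith)] at h
  rw [div_le_iff₀ (by nlinarith)]
  nlinarith

/-- If `k ∣ n` and `m = n/k`, there is a partition of `{1,…,n}` into `m`
clusters, each of size exactly `k` and each containing exactly one element
from every consecutive block `S_i = {(i−1)m+1, …, im}`, such that every
cluster `C` of the partition satisfies `EMD(C) ≤ (n−k)/(2(n−1)k)`.
In particular, for any real `t > 0` with `k ≥ n/(2(n−1)t+1)`, the partition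
is simultaneously `k`-anonymous (all clusters have at least `k` records) and
`t`-close (all clusters `C` satisfy `EMD(C) ≤ t`). -/
theorem exists_k_anonymous_t_close_partition (n k m : ℕ) (hn : 2 ≤ n)
    (hk : 1 ≤ k) (hdvd : k ∣ n) (hm : m = n / k) :
    ∃ P : Finset (Finset ℕ),
      P.card = m ∧
      (∀ x ∈ Finset.Icc 1 n, ∃! C, C ∈ P ∧ x ∈ C) ∧
      (∀ C ∈ P, C ⊆ Finset.Icc 1 n) ∧
      (∀ C ∈ P, C.card = k) ∧
      (∀ C ∈ P, ∀ i ∈ Finset.Icc 1 k,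
        (C ∩ Finset.Icc ((i - 1) * m + 1) (i * m)).card = 1) ∧
      (∀ C ∈ P, EMD n k C ≤ ((n : ℝ) - k) / (2 * ((n : ℝ) - 1) * k)) ∧
      (∀ t : ℝ, 0 < t → (n : ℝ) / (2 * ((n : ℝ) - 1) * t + 1) ≤ (k : ℝ) →
        (∀ C ∈ P, k ≤ C.card) ∧ (∀ C ∈ P, EMD n k C ≤ t)) := by
  obtain rfl : n = k * m := by rw [hm, Nat.mul_div_cancel' hdvd]
  have hm0 : 0 < m := Nat.pos_of_mul_pos_left (a := k) (by omega)
  have hcard : ∀ C ∈ residueClusters m k, #C = k :=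
    forall_mem_image.2 fun _ _ => card_arithProg hm0
  have hEMD : ∀ C ∈ residueClusters m k,
      EMD (k * m) k C ≤ (((k * m : ℕ) : ℝ) - k) / (2 * (((k * m : ℕ) : ℝ) - 1) * k) :=
    forall_mem_image.2 fun _ hb => EMD_arithProg_le (mem_range.1 hb) hk hn
  refine ⟨residueClusters m k, card_residueClusters hk, fun x hx =>
    existsUnique_mem_residueClusters hx,
    forall_mem_image.2 fun _ hb => arithProg_subset_Icc (mem_range.1 hb), hcard,
    forall_mem_image.2 fun _ hb _ hi => card_arithProg_inter_Icc_mul (mem_range.1 hb) hi, hEMD,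
    fun t ht htk => ⟨fun C hC => (hcard C hC).ge, fun C hC => (hEMD C hC).trans ?_⟩⟩
  exact sub_div_le_of_div_two_mul_add_one_le (by exact_mod_cast hn) (by exact_mod_cast hk) ht htk
end
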